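/- arXiv:1406.0445 — 5 statements merged into one kernel-verified Lean document; each statement's English description precedes it below -/
import Mathlib

section
/- Let (a_n)_{n≥1} be a nonincreasing sequence of positive reals with a_1 ≤ M, and let γ > 0. Suppose that for every integer N ≥ 1 one has (2N)^{-γ} ≤ e · (a_1 a_2 ⋯ a_N)^{1/N}. Then there is a constant c > 0 (depending only on γ and M) such that a_n ≥ c (n log n)^{-γ} for all n ≥ 2. -/
/-!
Monotonicity bounds `a₁ ⋯ a_N` by `M ^ n * a_n ^ (N - n)`, so the Weyl hypothesis at `N` gives
`(2N)^{-γ} ≤ e M^{n/N} a_n^{1 - n/N}`. Take `N = n L` with `L ≈ log n + 2`: solving for `a_n` means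
raising to the power `L / (L - 1) = 1 + 1 / (L - 1)`, which costs only a bounded factor because
`log (2N) = O(L)`, while `2N = O(n log n)`.
-/

open Real Finset

theorem prod_Icc_le_pow_mul_pow {a : ℕ → ℝ} {M : ℝ} {n N : ℕ}
    (hnonneg : ∀ j, 1 ≤ j → 0 ≤ a j) (hanti : AntitoneOn a (Set.Ici 1)) (hM : a 1 ≤ M)
    (hn : 1 ≤ n) (hnN : n ≤ N) :
    ∏ j ∈ Icc 1 N, a j ≤ M ^ n * a n ^ (N - n) := by
  have hsplit : ∏ j ∈ Icc 1 N, a j = (∏ j ∈ Ioc 0 n, a j) * ∏ j ∈ Ioc n N, a j := by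
    rw [prod_Ioc_consecutive a (Nat.zero_le n) hnN]
    rfl
  have hhead : ∏ j ∈ Ioc 0 n, a j ≤ M ^ n := by
    simpa using prod_le_prod (fun j hj => hnonneg j (mem_Ioc.1 hj).1)
      fun j hj => (hanti (Set.mem_Ici.2 le_rfl) (mem_Ioc.1 hj).1 (mem_Ioc.1 hj).1).trans hM
  have htail : ∏ j ∈ Ioc n N, a j ≤ a n ^ (N - n) := by
    simpa using prod_le_prod (fun j hj => hnonneg j (hn.trans (mem_Ioc.1 hj).1.le))
      fun j hj => hanti (Set.mem_Ici.2 hn) (Set.mem_Ici.2 (hn.trans (mem_Ioc.1 hj).1.le))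
        (mem_Ioc.1 hj).1.le
  rw [hsplit]
  exact mul_le_mul hhead htail (prod_nonneg fun j hj => hnonneg j (hn.trans (mem_Ioc.1 hj).1.le))
    (pow_nonneg ((hnonneg 1 le_rfl).trans hM) n)

theorem prod_Icc_rpow_one_div_le {a : ℕ → ℝ} {M : ℝ} {n N : ℕ}
    (hnonneg : ∀ j, 1 ≤ j → 0 ≤ a j) (hanti : AntitoneOn a (Set.Ici 1)) (hM : a 1 ≤ M)
    (hn : 1 ≤ n) (hnN : n ≤ N) :
    (∏ j ∈ Icc 1 N, a j) ^ ((1 : ℝ) / N) ≤ M ^ ((n : ℝ) / N) * a n ^ (1 - (n : ℝ) / N) := by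
  have hM0 : 0 ≤ M := (hnonneg 1 le_rfl).trans hM
  have hN : (0 : ℝ) < N := by exact_mod_cast hn.trans hnN
  calc (∏ j ∈ Icc 1 N, a j) ^ ((1 : ℝ) / N)
      ≤ (M ^ n * a n ^ (N - n)) ^ ((1 : ℝ) / N) :=
        rpow_le_rpow (prod_nonneg fun j hj => hnonneg j (mem_Icc.1 hj).1)
          (prod_Icc_le_pow_mul_pow hnonneg hanti hM hn hnN) (by positivity)
    _ = M ^ ((n : ℝ) / N) * a n ^ (1 - (n : ℝ) / N) := by
        rw [mul_rpow (by positivity) (pow_nonneg (hnonneg n hn) _), ← rpow_natCast, ← rpow_natCast,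
          ← rpow_mul hM0, ← rpow_mul (hnonneg n hn), Nat.cast_sub hnN]
        congr 2 <;> field_simp

theorem prod_Icc_mul_rpow_one_div_le {a : ℕ → ℝ} {M : ℝ} {n L : ℕ}
    (hnonneg : ∀ j, 1 ≤ j → 0 ≤ a j) (hanti : AntitoneOn a (Set.Ici 1)) (hM : a 1 ≤ M)
    (hM1 : 1 ≤ M) (hn : 1 ≤ n) (hL : 1 ≤ L) :
    (∏ j ∈ Icc 1 (n * L), a j) ^ ((1 : ℝ) / ↑(n * L)) ≤ M * a n ^ (1 - 1 / (L : ℝ)) := by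
  have hmean := prod_Icc_rpow_one_div_le hnonneg hanti hM hn (Nat.le_mul_of_pos_right n hL)
  have hn0 : (n : ℝ) ≠ 0 := by positivity
  rw [Nat.cast_mul] at hmean ⊢
  rw [div_mul_cancel_left₀ hn0, ← one_div] at hmean
  exact hmean.trans <| mul_le_mul_of_nonneg_right
    (rpow_le_self_of_one_le hM1 (by bound)) (rpow_nonneg (hnonneg n hn) _)

theorem le_of_rpow_neg_le_mul_rpow {x T K L γ B : ℝ} (hx : 0 < x) (hT : 0 < T) (hK : 1 ≤ K)
    (hL : 2 ≤ L) (hγ : 0 ≤ γ) (hTL : log T ≤ B * (L - 1))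
    (h : T ^ (-γ) ≤ K * x ^ (1 - 1 / L)) :
    exp (-(γ * B)) / K ^ 2 * T ^ (-γ) ≤ x := by
  have hK0 : 0 < K := one_pos.trans_le hK
  have hlogK : 0 ≤ log K := log_nonneg hK
  have hlog : -γ * log T ≤ log K + (1 - 1 / L) * log x := by
    have := log_le_log (by positivity) h
    rwa [log_rpow hT, log_mul hK0.ne' (by positivity), log_rpow hx] at this
  have hLx : -γ * L * log T ≤ L * log K + (L - 1) * log x := by
    have := mul_le_mul_of_nonneg_left hlog (by linarith : (0 : ℝ) ≤ L)
    field_simp at this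
    linarith
  rw [← log_le_log_iff (by positivity) hx, log_mul (by positivity) (by positivity),
    log_div (by positivity) (by positivity), log_exp, log_pow, log_rpow hT, Nat.cast_ofNat]
  -- dividing `hLx` by `L - 1` costs one more `log K` and `γ * log T / (L - 1) ≤ γ * B`
  refine le_of_mul_le_mul_left ?_ (by linarith : (0 : ℝ) < L - 1)
  nlinarith [mul_nonneg hγ (by linarith : 0 ≤ B * (L - 1) - log T),
    mul_nonneg (by linarith : (0 : ℝ) ≤ L - 2) hlogK]

theorem exists_nat_factor_log_bounds {n : ℕ} (hn : 2 ≤ n) :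
    ∃ L : ℕ, 2 ≤ L ∧ log (2 * ((n : ℝ) * L)) ≤ 2 * ((L : ℝ) - 1) ∧
      2 * ((n : ℝ) * L) ≤ 12 * (n * log n) := by
  have hn2 : (2 : ℝ) ≤ n := by exact_mod_cast hn
  have hlogn : 0.6 < log n :=
    log_two_gt_d9.trans_le' (by norm_num) |>.trans_le (log_le_log two_pos hn2)
  refine ⟨⌈log n⌉₊ + 2, by omega, ?_, ?_⟩
  · have hceil := Nat.le_ceil (log n)
    have hlog2 := log_le_sub_one_of_pos (show (0 : ℝ) < 2 by norm_num)
    have hlogL := log_le_sub_one_of_pos (show (0 : ℝ) < ⌈log n⌉₊ + 2 by positivity)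
    push_cast
    rw [log_mul (by positivity) (by positivity), log_mul (by positivity) (by positivity)]
    linarith
  · have hceil := Nat.ceil_lt_add_one (by linarith : 0 ≤ log n)
    push_cast
    nlinarith

/-- From the multiplicative Weyl-type hypothesis `(2N)^{-γ} ≤ e (a_1 ⋯ a_N)^{1/N}`
for a nonincreasing sequence of positive reals with `a_1 ≤ M`, one deduces the
pointwise lower bound `a_n ≥ c (n log n)^{-γ}`. -/
theorem pointwise_lower_bound_from_weyl
    (a : ℕ → ℝ) (γ M : ℝ) (hγ : 0 < γ)
    (hpos : ∀ n, 1 ≤ n → 0 < a n)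
    (hmono : ∀ m n, 1 ≤ m → m ≤ n → a n ≤ a m)
    (hM : a 1 ≤ M)
    (hweyl : ∀ N : ℕ, 1 ≤ N →
      (2 * (N : ℝ)) ^ (-γ) ≤ Real.exp 1 * (∏ j ∈ Finset.Icc 1 N, a j) ^ ((1 : ℝ) / N)) :
    ∃ c : ℝ, 0 < c ∧ ∀ n : ℕ, 2 ≤ n →
      c * ((n : ℝ) * Real.log n) ^ (-γ) ≤ a n := by
  set K := exp 1 * max M 1
  have hK : 1 ≤ K := one_le_mul_of_one_le_of_one_le (one_le_exp zero_le_one) (le_max_right M 1)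
  refine ⟨exp (-(γ * 2)) / K ^ 2 * 12 ^ (-γ), by positivity, fun n hn => ?_⟩
  obtain ⟨L, hL, hlogN, hN⟩ := exists_nat_factor_log_bounds hn
  have hn1 : 1 ≤ n := by omega
  have hn0 : (0 : ℝ) < n := by positivity
  have hT : (0 : ℝ) < 2 * (n * L) := by positivity
  have hweylN : (2 * ((n : ℝ) * L)) ^ (-γ) ≤ K * a n ^ (1 - 1 / (L : ℝ)) := calc
    _ ≤ exp 1 * (∏ j ∈ Icc 1 (n * L), a j) ^ ((1 : ℝ) / ↑(n * L)) := by
        exact_mod_cast hweyl (n * L) (Nat.one_le_iff_ne_zero.2 (by positivity))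
    _ ≤ K * a n ^ (1 - 1 / (L : ℝ)) := by
        rw [mul_assoc]
        exact mul_le_mul_of_nonneg_left (prod_Icc_mul_rpow_one_div_le (fun j hj => (hpos j hj).le)
          (fun i hi j _ hij => hmono i j hi hij) (hM.trans (le_max_left M 1)) (le_max_right M 1)
          hn1 (by omega)) (exp_pos 1).le
  calc _ = exp (-(γ * 2)) / K ^ 2 * (12 * (n * log n)) ^ (-γ) := by
        rw [mul_rpow (by norm_num) (mul_nonneg hn0.le (log_natCast_nonneg n)), mul_assoc]
    _ ≤ exp (-(γ * 2)) / K ^ 2 * (2 * ((n : ℝ) * L)) ^ (-γ) :=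
        mul_le_mul_of_nonneg_left (rpow_le_rpow_of_nonpos hT hN (by linarith)) (by positivity)
    _ ≤ a n := le_of_rpow_neg_le_mul_rpow (hpos n hn1) hT hK (by exact_mod_cast hL) hγ.le hlogN
        hweylN
end

section
/- Let (a_n)_{n≥1} be a nonincreasing sequence of positive reals and γ > 0 such that for every N ≥ 1, (2N)^{-γ} ≤ e (a_1 ⋯ a_N)^{1/N}. Then ∑_{n=1}^∞ a_n^{1/γ} = ∞. -/
/-!
Put `b n = a (n + 1) ^ (1 / γ)`. Raising the hypothesis to the power `1 / γ` says that `N` times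
the geometric mean of `b 0, …, b (N - 1)` stays above a positive constant. Writing
`b i = ((i + 1) * b i) / (i + 1)`, AM–GM together with `N! ≥ (N / e) ^ N` bounds that quantity
by `e` times the average of `(i + 1) * b i`, and this average tends to `0` when `∑ b` converges
(Kronecker's lemma: it is the difference of the partial sums and their Cesàro means).
-/

open Filter Finset Real Topology
open scoped Nat

theorem sum_range_succ_mul_eq {R : Type*} [CommRing R] (b : ℕ → R) (N : ℕ) :
    ∑ i ∈ range N, ((i : R) + 1) * b i =
      N * ∑ i ∈ range N, b i - ∑ k ∈ range N, ∑ i ∈ range k, b i := by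
  induction N with
  | zero => simp
  | succ N ih =>
    rw [sum_range_succ, ih]
    simp only [sum_range_succ]
    push_cast
    ring

theorem Summable.tendsto_inv_mul_sum_range_succ_mul {b : ℕ → ℝ} (hb : Summable b) :
    Tendsto (fun N : ℕ => (N : ℝ)⁻¹ * ∑ i ∈ range N, ((i : ℝ) + 1) * b i)
      atTop (𝓝 0) := by
  have hS := hb.hasSum.tendsto_sum_nat
  have hdiff := hS.sub hS.cesaro
  rw [sub_self] at hdiff
  refine hdiff.congr' ?_
  filter_upwards [eventually_ne_atTop 0] with N hN
  rw [sum_range_succ_mul_eq, mul_sub, ← mul_assoc, inv_mul_cancel₀ (Nat.cast_ne_zero.2 hN),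
    one_mul]

theorem nat_le_exp_one_mul_factorial_rpow_inv (N : ℕ) :
    (N : ℝ) ≤ exp 1 * (N ! : ℝ) ^ (N : ℝ)⁻¹ := by
  rcases eq_or_ne N 0 with rfl | hN
  · simp [(exp_pos 1).le]
  have hpow : (N : ℝ) ^ N ≤ exp N * N ! := by
    have := pow_div_factorial_le_exp _ (Nat.cast_nonneg N) N
    rwa [div_le_iff₀ (by positivity)] at this
  calc (N : ℝ) = ((N : ℝ) ^ N) ^ (N : ℝ)⁻¹ :=
        (pow_rpow_inv_natCast (Nat.cast_nonneg N) hN).symm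
    _ ≤ (exp N * N !) ^ (N : ℝ)⁻¹ := by gcongr
    _ = exp 1 * (N ! : ℝ) ^ (N : ℝ)⁻¹ := by
      rw [mul_rpow (exp_pos _).le (by positivity), ← exp_mul,
        mul_inv_cancel₀ (Nat.cast_ne_zero.2 hN)]

theorem nat_mul_prod_rpow_inv_le {b : ℕ → ℝ} (hb : ∀ i, 0 ≤ b i) (N : ℕ) :
    N * (∏ i ∈ range N, b i) ^ (N : ℝ)⁻¹ ≤
      exp 1 * ((N : ℝ)⁻¹ * ∑ i ∈ range N, ((i : ℝ) + 1) * b i) := by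
  rcases eq_or_ne N 0 with rfl | hN
  · simp
  have hprod : ∏ i ∈ range N, ((i : ℝ) + 1) * b i = N ! * ∏ i ∈ range N, b i := by
    rw [prod_mul_distrib, ← prod_range_add_one_eq_factorial]
    push_cast
    rfl
  have hamgm : (∏ i ∈ range N, ((i : ℝ) + 1) * b i) ^ (N : ℝ)⁻¹ ≤
      (N : ℝ)⁻¹ * ∑ i ∈ range N, ((i : ℝ) + 1) * b i := by
    have := geom_mean_le_arith_mean (range N) (fun _ => 1) (fun i => ((i : ℝ) + 1) * b i)
      (fun _ _ => zero_le_one) (by simpa using Nat.pos_of_ne_zero hN)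
      (fun i _ => mul_nonneg (by positivity) (hb i))
    simpa [inv_mul_eq_div] using this
  calc (N : ℝ) * (∏ i ∈ range N, b i) ^ (N : ℝ)⁻¹
      ≤ exp 1 * (N ! : ℝ) ^ (N : ℝ)⁻¹ * (∏ i ∈ range N, b i) ^ (N : ℝ)⁻¹ := by
        gcongr
        · exact rpow_nonneg (prod_nonneg fun i _ => hb i) _
        · exact nat_le_exp_one_mul_factorial_rpow_inv N
    _ = exp 1 * (∏ i ∈ range N, ((i : ℝ) + 1) * b i) ^ (N : ℝ)⁻¹ := by
        rw [mul_assoc, ← mul_rpow (by positivity) (prod_nonneg fun i _ => hb i), hprod]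
    _ ≤ _ := by gcongr

theorem Summable.tendsto_nat_mul_prod_rpow_inv {b : ℕ → ℝ} (hb : Summable b)
    (hb₀ : ∀ i, 0 ≤ b i) :
    Tendsto (fun N : ℕ => N * (∏ i ∈ range N, b i) ^ (N : ℝ)⁻¹) atTop (𝓝 0) := by
  refine squeeze_zero (fun N => mul_nonneg N.cast_nonneg
    (rpow_nonneg (prod_nonneg fun i _ => hb₀ i) _)) (nat_mul_prod_rpow_inv_le hb₀) ?_
  simpa using hb.tendsto_inv_mul_sum_range_succ_mul.const_mul (exp 1)

theorem inv_two_mul_exp_le_nat_mul_prod_rpow_inv {a : ℕ → ℝ} {γ : ℝ} (hγ : 0 < γ)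
    (ha : ∀ i, 0 ≤ a i) {N : ℕ} (hN : N ≠ 0)
    (h : (2 * (N : ℝ)) ^ (-γ) ≤ exp 1 * (∏ i ∈ range N, a i) ^ (N : ℝ)⁻¹) :
    (2 * exp γ⁻¹)⁻¹ ≤ N * (∏ i ∈ range N, a i ^ γ⁻¹) ^ (N : ℝ)⁻¹ := by
  have hP : 0 ≤ ∏ i ∈ range N, a i ^ γ⁻¹ := prod_nonneg fun i _ => rpow_nonneg (ha i) _
  have hprod : ∏ i ∈ range N, a i = (∏ i ∈ range N, a i ^ γ⁻¹) ^ γ := by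
    rw [← finsetProd_rpow _ _ fun i _ => rpow_nonneg (ha i) _]
    simp_rw [rpow_inv_rpow (ha _) hγ.ne']
  set g := (∏ i ∈ range N, a i ^ γ⁻¹) ^ (N : ℝ)⁻¹
  have hg : 0 ≤ g := rpow_nonneg hP _
  have hrpow : ((2 * (N : ℝ))⁻¹) ^ γ ≤ (exp γ⁻¹ * g) ^ γ := by
    calc ((2 * (N : ℝ))⁻¹) ^ γ = (2 * (N : ℝ)) ^ (-γ) := by
          rw [inv_rpow (by positivity), rpow_neg (by positivity)]
      _ ≤ exp 1 * (∏ i ∈ range N, a i) ^ (N : ℝ)⁻¹ := h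
      _ = (exp γ⁻¹ * g) ^ γ := by
          rw [mul_rpow (exp_pos _).le hg, ← exp_mul, inv_mul_cancel₀ hγ.ne', hprod,
            ← rpow_mul hP, mul_comm γ, rpow_mul hP]
  rw [rpow_le_rpow_iff (by positivity) (by positivity) hγ] at hrpow
  rw [inv_le_iff_one_le_mul₀ (by positivity)]
  calc (1 : ℝ) = 2 * N * (2 * (N : ℝ))⁻¹ := by field_simp
    _ ≤ 2 * N * (exp γ⁻¹ * g) := by gcongr
    _ = N * g * (2 * exp γ⁻¹) := by ring

theorem not_summable_from_weyl_general
    (a : ℕ → ℝ) (γ : ℝ) (hγ : 0 < γ)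
    (hpos : ∀ n, 1 ≤ n → 0 < a n)
    (hweyl : ∀ N : ℕ, 1 ≤ N →
      (2 * (N : ℝ)) ^ (-γ) ≤ Real.exp 1 * (∏ j ∈ Finset.Icc 1 N, a j) ^ ((1 : ℝ) / N)) :
    ¬ Summable (fun n : ℕ => a (n + 1) ^ ((1 : ℝ) / γ)) := by
  intro hsum
  simp only [one_div] at hsum hweyl
  have ha : ∀ i, 0 ≤ a (i + 1) := fun i => (hpos _ i.succ_pos).le
  have hlow : ∀ᶠ N : ℕ in atTop,
      (2 * exp γ⁻¹)⁻¹ ≤ N * (∏ i ∈ range N, a (i + 1) ^ γ⁻¹) ^ (N : ℝ)⁻¹ := by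
    filter_upwards [eventually_ne_atTop 0] with N hN
    refine inv_two_mul_exp_le_nat_mul_prod_rpow_inv hγ ha hN ?_
    rw [range_eq_Ico, prod_Ico_add' a 0 N 1, zero_add, Ico_add_one_right_eq_Icc]
    exact hweyl N (Nat.one_le_iff_ne_zero.2 hN)
  have hlim := hsum.tendsto_nat_mul_prod_rpow_inv fun i => rpow_nonneg (ha i) _
  have : (0 : ℝ) < (2 * exp γ⁻¹)⁻¹ := by positivity
  linarith [ge_of_tendsto hlim hlow]

/-- From the multiplicative Weyl-type hypothesis `(2N)^{-γ} ≤ e (a_1 ⋯ a_N)^{1/N}`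
for a nonincreasing sequence of positive reals, the series `∑ a_n^{1/γ}` diverges. -/
theorem not_summable_from_weyl
    (a : ℕ → ℝ) (γ : ℝ) (hγ : 0 < γ)
    (hpos : ∀ n, 1 ≤ n → 0 < a n)
    (hmono : ∀ m n, 1 ≤ m → m ≤ n → a n ≤ a m)
    (hweyl : ∀ N : ℕ, 1 ≤ N →
      (2 * (N : ℝ)) ^ (-γ) ≤ Real.exp 1 * (∏ j ∈ Finset.Icc 1 N, a j) ^ ((1 : ℝ) / N)) :
    ¬ Summable (fun n : ℕ => a (n + 1) ^ ((1 : ℝ) / γ)) :=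
  not_summable_from_weyl_general a γ hγ hpos hweyl
end

section
/- Let N ≥ 2 be an integer and define Λ̂(ξ) = (N/2) · sin(ξ) sin(ξ/N) / ξ² for ξ ≠ 0, extended continuously by Λ̂(0) = 1/2. Then ∫_ℝ |Λ̂(ξ)| dξ ≤ C log N for an absolute constant C. -/
open MeasureTheory Set
open scoped ENNReal

private lemma meas_rpow_neg2 : Measurable fun ξ : ℝ => ξ ^ (-2:ℝ) := by measurability

/-- The Fourier transform `Λ̂(ξ) = (N/2) sin ξ sin(ξ/N)/ξ²` of the trapezoidal
function satisfies the `L¹` bound `‖Λ̂‖₁ ≤ C log N` for an absolute constant `C`. -/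
theorem trapezoid_fourier_L1_bound :
    ∃ C : ℝ, 0 < C ∧ ∀ N : ℕ, 2 ≤ N →
      (∫⁻ ξ : ℝ, ENNReal.ofReal
          |((N : ℝ) / 2) * (Real.sin ξ * Real.sin (ξ / N)) / ξ ^ 2|)
        ≤ ENNReal.ofReal (C * Real.log N) := by
  refine ⟨5, by norm_num, fun N hN => ?_⟩
  have h2N : (2 : ℝ) ≤ (N : ℝ) := by exact_mod_cast hN
  have hN1 : (1 : ℝ) ≤ (N : ℝ) := by linarith
  have hN0 : (0 : ℝ) < (N : ℝ) := by linarith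
  have hlogN : 0 ≤ Real.log N := Real.log_nonneg hN1
  set f : ℝ → ℝ≥0∞ := fun ξ =>
    ENNReal.ofReal |((N : ℝ) / 2) * (Real.sin ξ * Real.sin (ξ / N)) / ξ ^ 2| with hf
  -- evenness
  have heven : ∀ ξ : ℝ, f (-ξ) = f ξ := by
    intro ξ
    simp only [hf, neg_div, Real.sin_neg, neg_mul_neg, neg_sq]
  -- absolute value simplification
  have habs : ∀ ξ : ℝ,
      |((N : ℝ) / 2) * (Real.sin ξ * Real.sin (ξ / N)) / ξ ^ 2|
        = ((N : ℝ) / 2) * (|Real.sin ξ| * |Real.sin (ξ / N)|) / ξ ^ 2 := by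
    intro ξ
    rw [abs_div, abs_mul, abs_mul, abs_of_nonneg (by positivity : (0:ℝ) ≤ (N:ℝ)/2),
      abs_of_nonneg (by positivity : (0:ℝ) ≤ ξ ^ 2)]
  -- pointwise bounds
  have b1 : ∀ ξ ∈ Ioc (0:ℝ) 1,
      |((N : ℝ) / 2) * (Real.sin ξ * Real.sin (ξ / N)) / ξ ^ 2| ≤ 1/2 := by
    rintro ξ ⟨hξ0, -⟩
    rw [habs]
    have h1 : |Real.sin ξ| ≤ ξ := Real.abs_sin_le_abs.trans_eq (abs_of_pos hξ0)
    have h2 : |Real.sin (ξ / N)| ≤ ξ / N :=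
      Real.abs_sin_le_abs.trans_eq (abs_of_pos (by positivity))
    have key : ((N : ℝ) / 2) * (ξ * (ξ / N)) / ξ ^ 2 = 1/2 := by
      field_simp
    calc ((N : ℝ) / 2) * (|Real.sin ξ| * |Real.sin (ξ / N)|) / ξ ^ 2
        ≤ ((N : ℝ) / 2) * (ξ * (ξ / N)) / ξ ^ 2 := by
          gcongr
      _ = 1/2 := key
  have b2 : ∀ ξ ∈ Ioc (1:ℝ) (N:ℝ),
      |((N : ℝ) / 2) * (Real.sin ξ * Real.sin (ξ / N)) / ξ ^ 2| ≤ 1/(2*ξ) := by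
    rintro ξ ⟨hξ1, -⟩
    have hξ0 : (0:ℝ) < ξ := lt_trans one_pos hξ1
    rw [habs]
    have h1 : |Real.sin ξ| ≤ 1 := abs_le.2 ⟨Real.neg_one_le_sin ξ, Real.sin_le_one ξ⟩
    have h2 : |Real.sin (ξ / N)| ≤ ξ / N :=
      Real.abs_sin_le_abs.trans_eq (abs_of_pos (by positivity))
    have key : ((N : ℝ) / 2) * (1 * (ξ / N)) / ξ ^ 2 = 1/(2*ξ) := by
      field_simp
    calc ((N : ℝ) / 2) * (|Real.sin ξ| * |Real.sin (ξ / N)|) / ξ ^ 2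
        ≤ ((N : ℝ) / 2) * (1 * (ξ / N)) / ξ ^ 2 := by
          gcongr
      _ = 1/(2*ξ) := key
  have b3 : ∀ ξ ∈ Ioi (N:ℝ),
      |((N : ℝ) / 2) * (Real.sin ξ * Real.sin (ξ / N)) / ξ ^ 2|
        ≤ ((N : ℝ)/2) * ξ ^ (-2:ℝ) := by
    rintro ξ (hξN : (N:ℝ) < ξ)
    have hξ0 : (0:ℝ) < ξ := lt_of_le_of_lt hN0.le hξN
    rw [habs]
    have h1 : |Real.sin ξ| ≤ 1 := abs_le.2 ⟨Real.neg_one_le_sin ξ, Real.sin_le_one ξ⟩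
    have h2 : |Real.sin (ξ / N)| ≤ 1 :=
      abs_le.2 ⟨Real.neg_one_le_sin _, Real.sin_le_one _⟩
    have hrpow : ξ ^ (-2:ℝ) = (ξ ^ 2)⁻¹ := by
      rw [show (-2:ℝ) = -((2:ℕ):ℝ) by norm_num, Real.rpow_neg hξ0.le, Real.rpow_natCast]
    calc ((N : ℝ) / 2) * (|Real.sin ξ| * |Real.sin (ξ / N)|) / ξ ^ 2
        ≤ ((N : ℝ) / 2) * (1 * 1) / ξ ^ 2 := by
          gcongr
      _ = ((N : ℝ)/2) * ξ ^ (-2:ℝ) := by rw [hrpow]; field_simp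
  -- decomposition of ℝ
  have hA : (∫⁻ ξ : ℝ, f ξ) = (∫⁻ ξ in Iio (0:ℝ), f ξ) + ∫⁻ ξ in Ici (0:ℝ), f ξ := by
    rw [← lintegral_add_compl f measurableSet_Iio (μ := volume), compl_Iio]
  have hB : (∫⁻ ξ in Iio (0:ℝ), f ξ) = ∫⁻ ξ in Ioi (0:ℝ), f ξ := by
    calc (∫⁻ ξ in Iio (0:ℝ), f ξ) = ∫⁻ ξ in Neg.neg '' Ioi (0:ℝ), f ξ := by
          rw [Set.image_neg_Ioi, neg_zero]
      _ = ∫⁻ ξ in Ioi (0:ℝ), f (-ξ) :=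
          ((Measure.measurePreserving_neg (volume : Measure ℝ)).setLIntegral_comp_emb
            (MeasurableEquiv.neg ℝ).measurableEmbedding f (Ioi 0)).symm
      _ = ∫⁻ ξ in Ioi (0:ℝ), f ξ := by simp only [heven]
  have hC : (∫⁻ ξ in Ici (0:ℝ), f ξ) = ∫⁻ ξ in Ioi (0:ℝ), f ξ :=
    (setLIntegral_congr Ioi_ae_eq_Ici).symm
  -- split Ioi 0
  have disj2 : Disjoint (Ioc (1:ℝ) (N:ℝ)) (Ioi (N:ℝ)) := Ioc_disjoint_Ioi le_rfl
  have disj1 : Disjoint (Ioc (0:ℝ) 1) (Ioc (1:ℝ) (N:ℝ) ∪ Ioi (N:ℝ)) := by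
    refine (Ioc_disjoint_Ioi (le_refl (1:ℝ))).mono_right ?_
    exact union_subset Ioc_subset_Ioi_self (Ioi_subset_Ioi hN1)
  have hD : (∫⁻ ξ in Ioi (0:ℝ), f ξ)
      = (∫⁻ ξ in Ioc (0:ℝ) 1, f ξ)
        + ((∫⁻ ξ in Ioc (1:ℝ) (N:ℝ), f ξ) + ∫⁻ ξ in Ioi (N:ℝ), f ξ) := by
    rw [← lintegral_union measurableSet_Ioi disj2,
      ← lintegral_union (measurableSet_Ioc.union measurableSet_Ioi) disj1,
      Ioc_union_Ioi_eq_Ioi hN1, Ioc_union_Ioi_eq_Ioi zero_le_one]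
  -- piece 1
  have hE1 : (∫⁻ ξ in Ioc (0:ℝ) 1, f ξ) ≤ ENNReal.ofReal (1/2) := by
    calc (∫⁻ ξ in Ioc (0:ℝ) 1, f ξ)
        ≤ ∫⁻ _ in Ioc (0:ℝ) 1, ENNReal.ofReal (1/2) :=
          setLIntegral_mono measurable_const
            (fun ξ hξ => ENNReal.ofReal_le_ofReal (b1 ξ hξ))
      _ = ENNReal.ofReal (1/2) * volume (Ioc (0:ℝ) 1) := setLIntegral_const _ _
      _ = ENNReal.ofReal (1/2) := by simp [Real.volume_Ioc]
  -- piece 2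
  have hint2 : IntegrableOn (fun ξ : ℝ => 1/(2*ξ)) (Ioc 1 (N:ℝ)) := by
    rw [← intervalIntegrable_iff_integrableOn_Ioc_of_le hN1]
    refine intervalIntegral.intervalIntegrable_one_div (f := fun ξ : ℝ => 2*ξ) (fun x hx => ?_) ?_
    · rw [uIcc_of_le hN1] at hx
      have : (1:ℝ) ≤ x := hx.1
      positivity
    · exact (continuous_const.mul continuous_id).continuousOn
  have hE2 : (∫⁻ ξ in Ioc (1:ℝ) (N:ℝ), f ξ) ≤ ENNReal.ofReal (1/2 * Real.log N) := by
    have hmeas2 : Measurable fun ξ : ℝ => ENNReal.ofReal (1/(2*ξ)) := by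
      apply ENNReal.measurable_ofReal.comp
      simpa using ((measurable_const.mul measurable_id).inv).const_mul (1:ℝ)
    calc (∫⁻ ξ in Ioc (1:ℝ) (N:ℝ), f ξ)
        ≤ ∫⁻ ξ in Ioc (1:ℝ) (N:ℝ), ENNReal.ofReal (1/(2*ξ)) :=
          setLIntegral_mono hmeas2
            (fun ξ hξ => ENNReal.ofReal_le_ofReal (b2 ξ hξ))
      _ = ENNReal.ofReal (∫ ξ in Ioc (1:ℝ) (N:ℝ), 1/(2*ξ)) := by
          rw [ofReal_integral_eq_lintegral_ofReal hint2]
          exact ae_restrict_of_forall_mem measurableSet_Ioc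
            (fun x hx => by have : (1:ℝ) < x := hx.1; positivity)
      _ = ENNReal.ofReal (1/2 * Real.log N) := by
          congr 1
          rw [← intervalIntegral.integral_of_le hN1]
          have : ∀ ξ : ℝ, 1/(2*ξ) = (1/2) * (1/ξ) := fun ξ => by ring
          simp_rw [this]
          rw [intervalIntegral.integral_const_mul, integral_one_div, div_one]
          rw [uIcc_of_le hN1]
          rintro ⟨h0, -⟩
          linarith
  -- piece 3
  have hint3 : IntegrableOn (fun ξ : ℝ => ((N:ℝ)/2) * ξ ^ (-2:ℝ)) (Ioi (N:ℝ)) :=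
    (integrableOn_Ioi_rpow_of_lt (by norm_num) hN0).const_mul _
  have hE3 : (∫⁻ ξ in Ioi (N:ℝ), f ξ) ≤ ENNReal.ofReal (1/2) := by
    have hmeas3 : Measurable fun ξ : ℝ => ENNReal.ofReal (((N:ℝ)/2) * ξ ^ (-2:ℝ)) :=
      ENNReal.measurable_ofReal.comp (meas_rpow_neg2.const_mul _)
    calc (∫⁻ ξ in Ioi (N:ℝ), f ξ)
        ≤ ∫⁻ ξ in Ioi (N:ℝ), ENNReal.ofReal (((N:ℝ)/2) * ξ ^ (-2:ℝ)) :=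
          setLIntegral_mono hmeas3
            (fun ξ hξ => ENNReal.ofReal_le_ofReal (b3 ξ hξ))
      _ = ENNReal.ofReal (∫ ξ in Ioi (N:ℝ), ((N:ℝ)/2) * ξ ^ (-2:ℝ)) := by
          rw [ofReal_integral_eq_lintegral_ofReal hint3]
          refine ae_restrict_of_forall_mem measurableSet_Ioi (fun x hx => ?_)
          have hx0 : (0:ℝ) < x := lt_of_le_of_lt hN0.le hx
          positivity
      _ = ENNReal.ofReal (1/2) := by
          congr 1
          rw [integral_const_mul, integral_Ioi_rpow_of_lt (by norm_num) hN0]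
          rw [show (-2:ℝ) + 1 = -1 by norm_num, Real.rpow_neg_one]
          field_simp
  -- combine on Ioi 0
  have hI : (∫⁻ ξ in Ioi (0:ℝ), f ξ) ≤ ENNReal.ofReal (1 + 1/2 * Real.log N) := by
    rw [hD]
    refine le_trans (add_le_add hE1 (add_le_add hE2 hE3)) ?_
    rw [← ENNReal.ofReal_add (by positivity) (by norm_num),
      ← ENNReal.ofReal_add (by norm_num) (by positivity)]
    exact ENNReal.ofReal_le_ofReal (by linarith)
  -- conclude
  have hlog2 : Real.log 2 ≤ Real.log N := Real.log_le_log (by norm_num) h2N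
  have hlog2' : (0.6931471803 : ℝ) < Real.log 2 := Real.log_two_gt_d9
  calc (∫⁻ ξ : ℝ, f ξ)
      = (∫⁻ ξ in Ioi (0:ℝ), f ξ) + ∫⁻ ξ in Ioi (0:ℝ), f ξ := by rw [hA, hB, hC]
    _ ≤ ENNReal.ofReal (1 + 1/2 * Real.log N) + ENNReal.ofReal (1 + 1/2 * Real.log N) :=
        add_le_add hI hI
    _ = ENNReal.ofReal (2 + Real.log N) := by
        rw [← ENNReal.ofReal_add (by positivity) (by positivity)]
        congr 1
        ring
    _ ≤ ENNReal.ofReal (5 * Real.log N) := ENNReal.ofReal_le_ofReal (by linarith)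
end

section
/- Let a ∈ ℂ with Re a > 1/2, let 0 < r < Re a − 1/2, let n ≥ 1, ω = e^{2πi/n}, and set s_j = a + r ω^j for 1 ≤ j ≤ n. Define the finite Blaschke-type product B(s) = ((s−a)^n − r^n)/((s + conj(a) − 1)^n − r^n) for the half-plane Re s > 1/2. Then there exist constants c > 0 and 0 < ρ < 1, depending only on a and r (not on n), such that (2 Re s_j − 1)|B′(s_j)| ≥ c ρ^n for every j. -/
open Complex ComplexConjugate

/-!
The numerator of `B` vanishes at every `s_j`, so `B'(s_j) = n (s_j - a)^(n-1) / D(s_j)` with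
`D(s) = (s + conj a - 1)^n - r^n`, and `|s_j - a| = r`. Writing `d = 2 Re a - 1 > 2r`, one has
`s_j + conj a - 1 = d + r ω^j`, whose modulus lies in `[d - r, d + r]`; hence `D(s_j) ≠ 0`,
`|D(s_j)| ≤ 2 (d + r)^n` and `2 Re s_j - 1 ≥ d - 2r`. Together,
`(2 Re s_j - 1) |B'(s_j)| ≥ (d - 2r) n r^(n-1) / (2 (d + r)^n) ≥ (d - 2r)/(2r) · (r/(d + r))^n`.
-/

theorem HasDerivAt.div_of_eq_zero {𝕜 : Type*} [NontriviallyNormedField 𝕜] {f g : 𝕜 → 𝕜}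
    {f' g' x : 𝕜} (hf : HasDerivAt f f' x) (hg : HasDerivAt g g' x) (hgx : g x ≠ 0)
    (hfx : f x = 0) : HasDerivAt (fun y => f y / g y) (f' / g x) x := by
  have := hf.div hg hgx
  rwa [hfx, zero_mul, sub_zero, sq, ← div_div, mul_div_cancel_right₀ _ hgx] at this

theorem pow_ne_pow_of_norm_lt_norm {𝕜 : Type*} [NormedDivisionRing 𝕜] {w c : 𝕜} {n : ℕ}
    (hn : n ≠ 0) (h : ‖c‖ < ‖w‖) : w ^ n ≠ c ^ n := fun hwc => by
  have := congrArg norm hwc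
  rw [norm_pow, norm_pow] at this
  exact (pow_lt_pow_left₀ h (norm_nonneg c) hn).ne' this

noncomputable def circleBlaschke (a : ℂ) (r : ℝ) (n : ℕ) (z : ℂ) : ℂ :=
  ((z - a) ^ n - (r : ℂ) ^ n) / ((z + conj a - 1) ^ n - (r : ℂ) ^ n)

theorem hasDerivAt_circleBlaschke {a s : ℂ} {r : ℝ} {n : ℕ} (hs : (s - a) ^ n = (r : ℂ) ^ n)
    (hden : (s + conj a - 1) ^ n ≠ (r : ℂ) ^ n) :
    HasDerivAt (circleBlaschke a r n)
      (n * (s - a) ^ (n - 1) / ((s + conj a - 1) ^ n - (r : ℂ) ^ n)) s := by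
  have hnum_deriv : HasDerivAt (fun z : ℂ => (z - a) ^ n - (r : ℂ) ^ n)
      (n * (s - a) ^ (n - 1)) s := by
    simpa using (((hasDerivAt_id s).sub_const a).pow n).sub_const ((r : ℂ) ^ n)
  have hden_deriv : HasDerivAt (fun z : ℂ => (z + conj a - 1) ^ n - (r : ℂ) ^ n)
      (n * (s + conj a - 1) ^ (n - 1)) s := by
    simpa using ((((hasDerivAt_id s).add_const (conj a)).sub_const 1).pow n).sub_const
      ((r : ℂ) ^ n)
  exact hnum_deriv.div_of_eq_zero hden_deriv (sub_ne_zero.2 hden) (sub_eq_zero.2 hs)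

section UnitCircle

variable {a ζ : ℂ} {r d : ℝ}

theorem add_mul_add_conj_sub_one (a ζ : ℂ) (r : ℝ) :
    a + r * ζ + conj a - 1 = ((2 * a.re - 1 : ℝ) : ℂ) + r * ζ := by
  have := add_conj a
  push_cast at this ⊢
  linear_combination this

theorem sub_two_mul_le_two_mul_re_add_mul_sub_one (hr : 0 ≤ r) (hζ : ‖ζ‖ = 1) :
    2 * a.re - 1 - 2 * r ≤ 2 * (a + r * ζ).re - 1 := by
  have hre : -1 ≤ ζ.re := by
    have := abs_re_le_norm ζ
    rw [hζ] at this
    exact (abs_le.1 this).1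
  simp only [add_re, re_ofReal_mul]
  nlinarith

theorem sub_le_norm_ofReal_add_mul (hd : 0 ≤ d) (hr : 0 ≤ r) (hζ : ‖ζ‖ = 1) :
    d - r ≤ ‖(d : ℂ) + r * ζ‖ := by
  have := norm_sub_norm_le (d : ℂ) (-(r * ζ))
  rwa [sub_neg_eq_add, norm_neg, norm_mul, hζ, mul_one, norm_real, norm_real,
    Real.norm_of_nonneg hd, Real.norm_of_nonneg hr] at this

theorem norm_ofReal_add_mul_le (hd : 0 ≤ d) (hr : 0 ≤ r) (hζ : ‖ζ‖ = 1) :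
    ‖(d : ℂ) + r * ζ‖ ≤ d + r := by
  have := norm_add_le (d : ℂ) (r * ζ)
  rwa [norm_mul, hζ, mul_one, norm_real, norm_real, Real.norm_of_nonneg hd,
    Real.norm_of_nonneg hr] at this

theorem ofReal_add_mul_pow_ne_pow {n : ℕ} (hr : 0 ≤ r) (hrd : 2 * r < d) (hζ : ‖ζ‖ = 1)
    (hn : n ≠ 0) : ((d : ℂ) + r * ζ) ^ n ≠ (r : ℂ) ^ n := by
  refine pow_ne_pow_of_norm_lt_norm hn ?_
  rw [norm_real, Real.norm_of_nonneg hr]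
  linarith [sub_le_norm_ofReal_add_mul (d := d) (by linarith) hr hζ]

theorem norm_ofReal_add_mul_pow_sub_pow_le (n : ℕ) (hd : 0 ≤ d) (hr : 0 ≤ r) (hζ : ‖ζ‖ = 1) :
    ‖((d : ℂ) + r * ζ) ^ n - (r : ℂ) ^ n‖ ≤ 2 * (d + r) ^ n := by
  have hw := norm_ofReal_add_mul_le hd hr hζ
  calc _ ≤ ‖(d : ℂ) + r * ζ‖ ^ n + r ^ n := by
        simpa only [norm_pow, norm_real, Real.norm_of_nonneg hr] using
          norm_sub_le (((d : ℂ) + r * ζ) ^ n) ((r : ℂ) ^ n)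
    _ ≤ (d + r) ^ n + (d + r) ^ n := by gcongr; linarith
    _ = 2 * (d + r) ^ n := by ring

end UnitCircle

section RootsOfUnity

variable {a ζ : ℂ} {r : ℝ} {n : ℕ}

theorem norm_deriv_circleBlaschke (hr : 0 ≤ r) (hra : 2 * r < 2 * a.re - 1) (hn : n ≠ 0)
    (hζn : ζ ^ n = 1) (hζ : ‖ζ‖ = 1) :
    ‖deriv (circleBlaschke a r n) (a + r * ζ)‖ =
      n * r ^ (n - 1) / ‖(((2 * a.re - 1 : ℝ) : ℂ) + r * ζ) ^ n - (r : ℂ) ^ n‖ := by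
  have hsa : a + r * ζ - a = r * ζ := by ring
  have hzero : (a + r * ζ - a) ^ n = (r : ℂ) ^ n := by rw [hsa, mul_pow, hζn, mul_one]
  have hden := ofReal_add_mul_pow_ne_pow hr hra hζ hn
  rw [← add_mul_add_conj_sub_one] at hden
  rw [(hasDerivAt_circleBlaschke hzero hden).deriv, add_mul_add_conj_sub_one, hsa, norm_div,
    norm_mul, norm_pow, norm_mul, hζ, mul_one, Complex.norm_natCast, norm_real,
    Real.norm_of_nonneg hr]

theorem separation_circleBlaschke_ge (hr : 0 < r) (hra : 2 * r < 2 * a.re - 1) (hn : n ≠ 0)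
    (hζn : ζ ^ n = 1) (hζ : ‖ζ‖ = 1) :
    (2 * a.re - 1 - 2 * r) / (2 * r) * (r / (2 * a.re - 1 + r)) ^ n ≤
      (2 * (a + r * ζ).re - 1) * ‖deriv (circleBlaschke a r n) (a + r * ζ)‖ := by
  rw [norm_deriv_circleBlaschke hr.le hra hn hζn hζ]
  set d := 2 * a.re - 1
  have hD_le := norm_ofReal_add_mul_pow_sub_pow_le n (by linarith : 0 ≤ d) hr.le hζ
  have hD_pos : 0 < ‖((d : ℂ) + r * ζ) ^ n - (r : ℂ) ^ n‖ :=
    norm_pos_iff.2 (sub_ne_zero.2 (ofReal_add_mul_pow_ne_pow hr.le hra hζ hn))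
  have hre := sub_two_mul_le_two_mul_re_add_mul_sub_one (a := a) hr.le hζ
  have hn1 : 1 ≤ n := Nat.one_le_iff_ne_zero.2 hn
  have hrn : r ^ n = r * r ^ (n - 1) := by rw [← pow_succ', Nat.sub_add_cancel hn1]
  calc (d - 2 * r) / (2 * r) * (r / (d + r)) ^ n
      = (d - 2 * r) * (1 * r ^ (n - 1) / (2 * (d + r) ^ n)) := by
        have : d + r ≠ 0 := by linarith
        rw [div_pow, hrn]
        field_simp
    _ ≤ (d - 2 * r) * (n * r ^ (n - 1) / ‖((d : ℂ) + r * ζ) ^ n - (r : ℂ) ^ n‖) := by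
        gcongr
        exact_mod_cast hn1
    _ ≤ _ := by gcongr

end RootsOfUnity

theorem blaschke_separation_lower_bound_general
    (a : ℂ) (r : ℝ) (hr0 : 0 < r) (hr1 : r < a.re - 1 / 2) :
    ∃ c ρ : ℝ, 0 < c ∧ 0 < ρ ∧ ρ < 1 ∧
      ∀ n : ℕ, 1 ≤ n → ∀ j : ℕ, 1 ≤ j → j ≤ n →
        let ω : ℂ := Complex.exp (2 * Real.pi * I / n)
        let s : ℂ := a + (r : ℂ) * ω ^ j
        c * ρ ^ n ≤ (2 * s.re - 1) *
          ‖deriv (fun z : ℂ =>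
            ((z - a) ^ n - (r : ℂ) ^ n) /
              ((z + (starRingEnd ℂ) a - 1) ^ n - (r : ℂ) ^ n)) s‖ := by
  have hra : 2 * r < 2 * a.re - 1 := by linarith
  refine ⟨(2 * a.re - 1 - 2 * r) / (2 * r), r / (2 * a.re - 1 + r), by bound, by bound,
    (div_lt_one (by linarith)).2 (by linarith), ?_⟩
  intro n hn j _ _
  have hω := isPrimitiveRoot_exp n (by omega)
  exact separation_circleBlaschke_ge hr0 hra (by omega)
    (by rw [← pow_mul, mul_comm j n, pow_mul, hω.pow_eq_one, one_pow])
    (by rw [norm_pow, hω.norm'_eq_one (by omega), one_pow])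

/-- Uniform separation constant of the points `s_j = a + r ω^j` (with
`ω = e^{2πi/n}`) for the finite half-plane Blaschke product
`B(s) = ((s−a)^n − r^n)/((s + conj a − 1)^n − r^n)`: there are constants
`c > 0` and `0 < ρ < 1`, depending only on `a` and `r`, such that
`(2 Re s_j − 1)|B′(s_j)| ≥ c ρ^n` for every `j`. -/
theorem blaschke_separation_lower_bound
    (a : ℂ) (ha : 1 / 2 < a.re) (r : ℝ) (hr0 : 0 < r) (hr1 : r < a.re - 1 / 2) :
    ∃ c ρ : ℝ, 0 < c ∧ 0 < ρ ∧ ρ < 1 ∧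
      ∀ n : ℕ, 1 ≤ n → ∀ j : ℕ, 1 ≤ j → j ≤ n →
        let ω : ℂ := Complex.exp (2 * Real.pi * I / n)
        let s : ℂ := a + (r : ℂ) * ω ^ j
        c * ρ ^ n ≤ (2 * s.re - 1) *
          ‖deriv (fun z : ℂ =>
            ((z - a) ^ n - (r : ℂ) ^ n) /
              ((z + (starRingEnd ℂ) a - 1) ^ n - (r : ℂ) ^ n)) s‖ :=
  blaschke_separation_lower_bound_general a r hr0 hr1
end

section
/- There exists a constant C such that the n-th prime p_n satisfies p_n ≤ C n log n for all n ≥ 2. -/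
open Finset

private lemma cheb_aux (m : ℕ) (hm : 1 ≤ m) :
    4 ^ m ≤ (2 * m) ^ (Nat.count Nat.Prime (2 * m + 1) + 1) := by
  have h1 : Nat.centralBinom m ≤ (2 * m) ^ (Nat.count Nat.Prime (2 * m + 1)) := by
    calc Nat.centralBinom m
        = ∏ p ∈ Finset.range (2 * m + 1), p ^ (Nat.centralBinom m).factorization p :=
          (Nat.prod_pow_factorization_centralBinom m).symm
      _ ≤ ∏ p ∈ Finset.range (2 * m + 1), (if p.Prime then 2 * m else 1) := by
          apply Finset.prod_le_prod'
          intro p _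
          by_cases hp : p.Prime
          · simp only [if_pos hp]
            exact Nat.pow_factorization_choose_le (by omega)
          · simp [Nat.factorization_eq_zero_of_not_prime _ hp, hp]
      _ = (2 * m) ^ (Nat.count Nat.Prime (2 * m + 1)) := by
          rw [Finset.prod_ite, Finset.prod_const, Finset.prod_const_one, mul_one,
            Nat.count_eq_card_filter_range]
  calc 4 ^ m ≤ 2 * m * Nat.centralBinom m :=
        Nat.four_pow_le_two_mul_self_mul_centralBinom m hm
    _ ≤ 2 * m * (2 * m) ^ (Nat.count Nat.Prime (2 * m + 1)) :=
        Nat.mul_le_mul_left _ h1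
    _ = (2 * m) ^ (Nat.count Nat.Prime (2 * m + 1) + 1) := by ring

/-- Chebyshev-type upper bound for the `n`-th prime:
`p_n ≤ C n log n` for all `n ≥ 2` (here `p_1 = 2`, so `p_n` is
`Nat.nth Nat.Prime (n - 1)`). -/
theorem nth_prime_upper_bound :
    ∃ C : ℝ, 0 < C ∧ ∀ n : ℕ, 2 ≤ n →
      (Nat.nth Nat.Prime (n - 1) : ℝ) ≤ C * n * Real.log n := by
  refine ⟨24, by norm_num, ?_⟩
  intro n hn
  set p := Nat.nth Nat.Prime (n - 1) with hpdef
  have hp : p.Prime := Nat.prime_nth_prime (n - 1)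
  have h3 : 3 ≤ p := by
    have h2 : Nat.nth Nat.Prime 0 < Nat.nth Nat.Prime (n - 1) :=
      (Nat.nth_lt_nth Nat.infinite_setOf_prime).mpr (by omega)
    rw [Nat.nth_prime_zero_eq_two] at h2
    omega
  -- p is odd
  have hodd : Odd p := hp.odd_of_ne_two (by omega)
  obtain ⟨m, hm⟩ := hodd
  have hm1 : 1 ≤ m := by omega
  -- count of primes below p
  have hcount : Nat.count Nat.Prime (2 * m + 1) = n - 1 := by
    rw [← hm, hpdef]
    exact Nat.primeCounting'_nth_eq (n - 1)
  have hkey : 4 ^ m ≤ (2 * m) ^ n := by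
    have := cheb_aux m hm1
    rwa [hcount, Nat.sub_add_cancel (by omega)] at this
  -- cast to reals
  have hkeyR : (4 : ℝ) ^ m ≤ ((2 * m : ℕ) : ℝ) ^ n := by
    exact_mod_cast hkey
  set r : ℝ := (p : ℝ) with hrdef
  have hr3 : (3 : ℝ) ≤ r := by rw [hrdef]; exact_mod_cast h3
  have h2m : ((2 * m : ℕ) : ℝ) = r - 1 := by
    have : (p : ℝ) = 2 * m + 1 := by exact_mod_cast hm
    push_cast
    rw [hrdef, this]; ring
  have hlog : (r - 1) * Real.log 2 ≤ (n : ℝ) * Real.log r := by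
    have hlogs : (m : ℝ) * Real.log 4 ≤ (n : ℝ) * Real.log ((2 * m : ℕ) : ℝ) := by
      have h4 : (0 : ℝ) < 4 ^ m := by positivity
      have := Real.log_le_log h4 hkeyR
      rwa [Real.log_pow, Real.log_pow] at this
    have hmr : (m : ℝ) = (r - 1) / 2 := by
      rw [← h2m]; push_cast; ring
    have hlog4 : Real.log 4 = 2 * Real.log 2 := by
      rw [show (4 : ℝ) = 2 ^ 2 by norm_num, Real.log_pow]; push_cast; ring
    have hmono : Real.log ((2 * m : ℕ) : ℝ) ≤ Real.log r := by
      rw [h2m]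
      exact Real.log_le_log (by linarith) (by linarith)
    calc (r - 1) * Real.log 2 = (m : ℝ) * Real.log 4 := by rw [hmr, hlog4]; ring
      _ ≤ (n : ℝ) * Real.log ((2 * m : ℕ) : ℝ) := hlogs
      _ ≤ (n : ℝ) * Real.log r := by
          apply mul_le_mul_of_nonneg_left hmono (by positivity)
  have hlog2 : (1 : ℝ) / 2 ≤ Real.log 2 := by
    have := Real.log_two_gt_d9
    linarith
  have hn2 : (2 : ℝ) ≤ (n : ℝ) := by exact_mod_cast hn
  have hlogrpos : (1 : ℝ) / 2 ≤ Real.log r :=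
    hlog2.trans (Real.log_le_log (by norm_num) (by linarith))
  -- r ≤ 3 n log r
  have hmain : r ≤ 3 * (n : ℝ) * Real.log r := by
    nlinarith [mul_le_mul_of_nonneg_left hlogrpos (le_trans (by norm_num : (0:ℝ) ≤ 2) hn2)]
  -- log r ≤ 2 √r
  have hsq : Real.log r ≤ 2 * Real.sqrt r := by
    have h0 : (0 : ℝ) < Real.sqrt r := Real.sqrt_pos.mpr (by linarith)
    have := Real.log_le_sub_one_of_pos h0
    have hls : Real.log (Real.sqrt r) = Real.log r / 2 := Real.log_sqrt (by linarith)
    rw [hls] at this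
    linarith
  -- r ≤ 36 n^2
  have hr36 : r ≤ 36 * (n : ℝ) ^ 2 := by
    have hsr : Real.sqrt r * Real.sqrt r = r := Real.mul_self_sqrt (by linarith)
    have h0 : (0 : ℝ) < Real.sqrt r := Real.sqrt_pos.mpr (by linarith)
    have h6 : Real.sqrt r ≤ 6 * (n : ℝ) := by
      nlinarith
    nlinarith
  -- log r ≤ 8 log n
  have hlogn : Real.log 2 ≤ Real.log (n : ℝ) := Real.log_le_log (by norm_num) hn2
  have hlogr8 : Real.log r ≤ 8 * Real.log (n : ℝ) := by
    have h1 : Real.log r ≤ Real.log (36 * (n : ℝ) ^ 2) :=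
      Real.log_le_log (by linarith) hr36
    have h2 : Real.log (36 * (n : ℝ) ^ 2) = Real.log 36 + 2 * Real.log (n : ℝ) := by
      rw [Real.log_mul (by norm_num) (by positivity), Real.log_pow]
      push_cast; ring
    have h36 : Real.log 36 ≤ 6 * Real.log 2 := by
      have : Real.log 36 ≤ Real.log 64 := Real.log_le_log (by norm_num) (by norm_num)
      rw [show (64 : ℝ) = 2 ^ 6 by norm_num, Real.log_pow] at this
      push_cast at this
      linarith
    linarith
  calc r ≤ 3 * (n : ℝ) * Real.log r := hmain
    _ ≤ 3 * (n : ℝ) * (8 * Real.log (n : ℝ)) :=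
        mul_le_mul_of_nonneg_left hlogr8 (by positivity)
    _ = 24 * (n : ℝ) * Real.log (n : ℝ) := by ring
end
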